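/- arXiv:1611.02125 — 2 statements merged into one kernel-verified Lean document; each statement's English description precedes it below -/
import Mathlib

section
/- Let N ≥ 1, p > 1, γ > 1, and set ω₁(x) = (1 + |x|^{p/(p−1)})^{(p−1)(γ−1)} and ω₂(x) = (1 + |x|^{p/(p−1)})^{(p−1)γ}. Then for every smooth compactly supported function ξ : ℝ^N → ℝ, K ∫_{ℝ^N} |ξ(x)|^p ω₁(x) dx ≤ ∫_{ℝ^N} |∇ξ(x)|^p ω₂(x) dx, where K = N (p(γ−1)/(p−1))^{p−1}. -/
open MeasureTheory Real


private lemma young_aux {p γ : ℝ} (hp : 1 < p) (hγ : 1 < γ) {c r d B : ℝ}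
    (hc : 0 ≤ c) (hr : 0 ≤ r) (hd : 0 ≤ d) (hB : 0 < B) :
    p * (c ^ (p - 1) * d * r * B ^ ((p - 1) * (γ - 1)))
      ≤ p * (γ - 1) * (c ^ p * r ^ (p / (p - 1)) * B ^ ((p - 1) * (γ - 1) - 1))
        + (p * (γ - 1) / (p - 1)) ^ (1 - p) * (d ^ p * B ^ ((p - 1) * γ)) := by
  have hp1 : 0 < p - 1 := by linarith
  have hγ1 : 0 < γ - 1 := by linarith
  have hp0 : 0 < p := by linarith
  set q : ℝ := p / (p - 1) with hq
  have hq1 : 1 < q := by rw [hq, lt_div_iff₀ hp1]; linarith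
  have hconj : q.HolderConjugate p := Real.holderConjugate_iff.mpr ⟨hq1, by rw [hq]; field_simp; ring⟩
  set c₀ : ℝ := p * (γ - 1) / (p - 1) with hc₀
  have hc₀pos : 0 < c₀ := by positivity
  set e1 : ℝ := ((p - 1) * (γ - 1) - 1) * ((p - 1) / p) with he1
  set e2 : ℝ := (p - 1) * γ / p with he2
  set a : ℝ := c ^ (p - 1) * r * B ^ e1 with ha
  set b : ℝ := d * B ^ e2 with hb
  set s : ℝ := c₀ ^ ((p - 1) / p) with hs
  have hspos : 0 < s := rpow_pos_of_pos hc₀pos _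
  have ha0 : 0 ≤ a := by positivity
  have hb0 : 0 ≤ b := by positivity
  have hyoung := Real.young_inequality_of_nonneg (mul_nonneg hspos.le ha0)
      (div_nonneg hb0 hspos.le) hconj
  have hsq : s ^ q = c₀ := by
    rw [hs, ← Real.rpow_mul hc₀pos.le]
    rw [show (p - 1) / p * q = 1 by rw [hq]; field_simp]
    exact rpow_one _
  have hsp : s ^ p = c₀ ^ (p - 1) := by
    rw [hs, ← Real.rpow_mul hc₀pos.le]
    congr 1; field_simp
  have key : p * (a * b) ≤ p * (γ - 1) * a ^ q + c₀ ^ (1 - p) * b ^ p := by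
    have h1 : s * a * (b / s) = a * b := by field_simp
    have h2 : (s * a) ^ q = c₀ * a ^ q := by rw [mul_rpow hspos.le ha0, hsq]
    have h3 : (b / s) ^ p = b ^ p / c₀ ^ (p - 1) := by rw [div_rpow hb0 hspos.le, hsp]
    rw [h1, h2, h3] at hyoung
    have h4 : c₀ ^ (1 - p) = (c₀ ^ (p - 1))⁻¹ := by
      rw [show (1 - p) = -(p - 1) by ring, rpow_neg hc₀pos.le]
    have h5 : p * (γ - 1) = (p / q) * c₀ := by rw [hq, hc₀]; field_simp
    have hq0 : 0 < q := by linarith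
    have hcp : 0 < c₀ ^ (p - 1) := rpow_pos_of_pos hc₀pos _
    calc p * (a * b) ≤ p * (c₀ * a ^ q / q + b ^ p / c₀ ^ (p - 1) / p) := by
          nlinarith [hyoung]
      _ = (p / q) * c₀ * a ^ q + b ^ p / c₀ ^ (p - 1) := by field_simp
      _ = p * (γ - 1) * a ^ q + c₀ ^ (1 - p) * b ^ p := by
          rw [h5, h4]; field_simp
  have T1 : a * b = c ^ (p - 1) * d * r * B ^ ((p - 1) * (γ - 1)) := by
    have : B ^ e1 * B ^ e2 = B ^ ((p - 1) * (γ - 1)) := by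
      rw [← rpow_add hB]; congr 1; rw [he1, he2]; field_simp; ring
    rw [ha, hb, ← this]; ring
  have T2 : a ^ q = c ^ p * r ^ q * B ^ ((p - 1) * (γ - 1) - 1) := by
    rw [ha, mul_rpow (by positivity) (rpow_nonneg hB.le _),
        mul_rpow (by positivity) hr, ← Real.rpow_mul hc, ← Real.rpow_mul hB.le]
    rw [show (p - 1) * q = p by rw [hq]; field_simp]
    rw [show e1 * q = (p - 1) * (γ - 1) - 1 by rw [he1, hq]; field_simp]
  have T3 : b ^ p = d ^ p * B ^ ((p - 1) * γ) := by
    rw [hb, mul_rpow hd (rpow_nonneg hB.le _), ← Real.rpow_mul hB.le]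
    rw [show e2 * p = (p - 1) * γ by rw [he2]; field_simp]
  rw [T1, T2, T3] at key
  exact key

private lemma pointwise_key {p γ : ℝ} (hp : 1 < p) (hγ : 1 < γ)
    (t r Dxx d : ℝ) (hr : 0 ≤ r) (hd : 0 ≤ d) (hDxx : |Dxx| ≤ d * r) :
    -(p * |t| ^ (p - 2) * t * Dxx) * (1 + r ^ (p / (p - 1))) ^ ((p - 1) * (γ - 1))
        - p * (γ - 1) *
          (|t| ^ p * r ^ (p / (p - 1)) * (1 + r ^ (p / (p - 1))) ^ ((p - 1) * (γ - 1) - 1))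
      ≤ (p * (γ - 1) / (p - 1)) ^ (1 - p) *
          (d ^ p * (1 + r ^ (p / (p - 1))) ^ ((p - 1) * γ)) := by
  have hp1 : 0 < p - 1 := by linarith
  have hp0 : (0:ℝ) < p := by linarith
  set q : ℝ := p / (p - 1) with hq
  set B : ℝ := 1 + r ^ q with hB
  have hrq : 0 ≤ r ^ q := rpow_nonneg hr _
  have hBpos : 0 < B := by rw [hB]; linarith
  have hBα : 0 ≤ B ^ ((p - 1) * (γ - 1)) := rpow_nonneg hBpos.le _
  have habs : |t| ^ (p - 2) * |t| = |t| ^ (p - 1) := by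
    rcases eq_or_ne t 0 with h | h
    · simp [h, Real.zero_rpow (show p - 1 ≠ 0 by linarith)]
    · rw [← Real.rpow_add_one (abs_ne_zero.2 h) (p - 2)]; ring_nf
  have step1 : -(p * |t| ^ (p - 2) * t * Dxx) ≤ p * (|t| ^ (p - 1) * d * r) := by
    have h1 : -(p * |t| ^ (p - 2) * t * Dxx) ≤ |p * |t| ^ (p - 2) * t * Dxx| := neg_le_abs _
    have h2 : |p * |t| ^ (p - 2) * t * Dxx| = p * |t| ^ (p - 2) * |t| * |Dxx| := by
      rw [abs_mul, abs_mul, abs_mul, abs_of_pos hp0,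
        abs_of_nonneg (rpow_nonneg (abs_nonneg t) _)]
    have h3 : p * |t| ^ (p - 2) * |t| * |Dxx| ≤ p * |t| ^ (p - 1) * (d * r) := by
      have : p * |t| ^ (p - 2) * |t| * |Dxx| = p * (|t| ^ (p - 2) * |t|) * |Dxx| := by ring
      rw [this, habs]
      exact mul_le_mul_of_nonneg_left hDxx (by positivity)
    calc -(p * |t| ^ (p - 2) * t * Dxx) ≤ p * |t| ^ (p - 2) * |t| * |Dxx| := h2 ▸ h1
      _ ≤ p * |t| ^ (p - 1) * (d * r) := h3
      _ = p * (|t| ^ (p - 1) * d * r) := by ring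
  have step2 := mul_le_mul_of_nonneg_right step1 hBα
  have young := young_aux hp hγ (abs_nonneg t) hr hd hBpos

  nlinarith [step2, young]

private lemma sum_single {N : ℕ} (x : EuclideanSpace ℝ (Fin N)) :
    ∑ i, (x i) • EuclideanSpace.single i (1:ℝ) = x := by
  simpa [EuclideanSpace.basisFun_apply, EuclideanSpace.basisFun_repr]
    using (EuclideanSpace.basisFun (Fin N) ℝ).sum_repr x

private lemma sum_sq {N : ℕ} (x : EuclideanSpace ℝ (Fin N)) :
    ∑ i, (x i) * (x i) = ‖x‖ ^ (2:ℕ) := by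
  rw [EuclideanSpace.norm_eq, Real.sq_sqrt (by positivity)]
  simp [sq]

private lemma div_identity {N : ℕ} {p q α : ℝ} (hp : 1 < p) (hq : 1 < q) (hα : 0 < α)
    (ξ : EuclideanSpace ℝ (Fin N) → ℝ)
    (hsmooth : ContDiff ℝ (⊤ : ℕ∞) ξ) (hcs : HasCompactSupport ξ) :
    ∫ x, |ξ x| ^ p * ((N : ℝ) * (1 + ‖x‖ ^ q) ^ α + α * q * ‖x‖ ^ q * (1 + ‖x‖ ^ q) ^ (α - 1))
      = - ∫ x, fderiv ℝ (fun y => |ξ y| ^ p) x x * (1 + ‖x‖ ^ q) ^ α := by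
  have hp0 : (0:ℝ) < p := by linarith
  have hq0 : (0:ℝ) < q := by linarith
  set u : EuclideanSpace ℝ (Fin N) → ℝ := fun y => |ξ y| ^ p with hu
  set W : EuclideanSpace ℝ (Fin N) → ℝ := fun x => (1 + ‖x‖ ^ q) ^ α with hW
  have hux : ∀ x : EuclideanSpace ℝ (Fin N), |ξ x| ^ p = u x := fun _ => rfl
  have hBpos : ∀ x : EuclideanSpace ℝ (Fin N), (0:ℝ) < 1 + ‖x‖ ^ q := fun x => by positivity
  have hξ1 : ContDiff ℝ 1 ξ := hsmooth.of_le (by simp)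
  have hu1 : ContDiff ℝ 1 u := by
    have h : u = fun y => ‖ξ y‖ ^ p := by ext y; rw [Real.norm_eq_abs]
    rw [h]; exact hξ1.norm_rpow hp
  have huc : HasCompactSupport u :=
    hcs.comp_left (g := fun t : ℝ => |t| ^ p)
      (by simp [Real.zero_rpow (show p ≠ 0 by linarith)])
  have hud : ∀ x, HasFDerivAt u ((p * |ξ x| ^ (p - 2) * ξ x) • fderiv ℝ ξ x) x := by
    intro x
    exact (hasDerivAt_abs_rpow (ξ x) hp).comp_hasFDerivAt x
      ((hξ1.differentiable one_ne_zero) x).hasFDerivAt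
  have hWd : ∀ x, HasFDerivAt W
      ((α * (1 + ‖x‖ ^ q) ^ (α - 1)) • ((q * ‖x‖ ^ (q - 2)) • innerSL ℝ x)) x := by
    intro x
    exact ((hasFDerivAt_norm_rpow x hq).const_add 1).rpow_const (Or.inl (hBpos x).ne')
  have hW1 : ContDiff ℝ 1 W := by
    rw [contDiff_iff_contDiffAt]
    intro x
    exact ((contDiff_const.add (contDiff_norm_rpow hq)).contDiffAt).rpow_const_of_ne
      (hBpos x).ne'
  set v : Fin N → EuclideanSpace ℝ (Fin N) := fun i => EuclideanSpace.single i (1:ℝ) with hv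
  set g : Fin N → EuclideanSpace ℝ (Fin N) → ℝ := fun i x => x i * W x with hg
  have hgd : ∀ (i : Fin N) x, HasFDerivAt (g i)
      ((x i) • ((α * (1 + ‖x‖ ^ q) ^ (α - 1)) • ((q * ‖x‖ ^ (q - 2)) • innerSL ℝ x))
        + W x • (EuclideanSpace.proj i : EuclideanSpace ℝ (Fin N) →L[ℝ] ℝ)) x := by
    intro i x
    exact ((EuclideanSpace.proj i).hasFDerivAt).mul (hWd x)
  have hg1 : ∀ i : Fin N, ContDiff ℝ 1 (g i) := fun i =>
    ((EuclideanSpace.proj i).contDiff).mul hW1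
  have int1 : ∀ i : Fin N, Integrable (fun x => fderiv ℝ u x (v i) * g i x) := by
    intro i
    apply Continuous.integrable_of_hasCompactSupport
    · exact ((hu1.continuous_fderiv one_ne_zero).clm_apply continuous_const).mul (hg1 i).continuous
    · exact (huc.fderiv_apply (𝕜 := ℝ) (v i)).mul_right
  have int2 : ∀ i : Fin N, Integrable (fun x => u x * fderiv ℝ (g i) x (v i)) := by
    intro i
    apply Continuous.integrable_of_hasCompactSupport
    · exact hu1.continuous.mul (((hg1 i).continuous_fderiv one_ne_zero).clm_apply continuous_const)
    · exact huc.mul_right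
  have int3 : ∀ i : Fin N, Integrable (fun x => u x * g i x) := by
    intro i
    apply Continuous.integrable_of_hasCompactSupport
    · exact hu1.continuous.mul (hg1 i).continuous
    · exact huc.mul_right
  have ibp : ∀ i : Fin N, ∫ x, u x * fderiv ℝ (g i) x (v i)
      = - ∫ x, fderiv ℝ u x (v i) * g i x := fun i =>
    integral_mul_fderiv_eq_neg_fderiv_mul_of_integrable (int1 i) (int2 i) (int3 i)
      (fun x _ => hu1.differentiable one_ne_zero x) (fun x _ => (hg1 i).differentiable one_ne_zero x)
  have hsum : ∫ x, ∑ i : Fin N, u x * fderiv ℝ (g i) x (v i)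
      = - ∫ x, ∑ i : Fin N, fderiv ℝ u x (v i) * g i x := by
    rw [integral_finset_sum _ (fun i _ => int2 i), integral_finset_sum _ (fun i _ => int1 i),
      ← Finset.sum_neg_distrib]
    exact Finset.sum_congr rfl fun i _ => ibp i
  have PW1 : ∀ x : EuclideanSpace ℝ (Fin N), ∑ i : Fin N, u x * fderiv ℝ (g i) x (v i)
      = u x * ((N : ℝ) * W x + α * q * ‖x‖ ^ q * (1 + ‖x‖ ^ q) ^ (α - 1)) := by
    intro x
    have hDg : ∀ i : Fin N, fderiv ℝ (g i) x (v i)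
        = W x + α * q * (1 + ‖x‖ ^ q) ^ (α - 1) * ‖x‖ ^ (q - 2) * (x i * x i) := by
      intro i
      rw [(hgd i x).fderiv]
      simp only [ContinuousLinearMap.add_apply, ContinuousLinearMap.smul_apply,
        innerSL_apply_apply, smul_eq_mul]
      have h1 : (EuclideanSpace.proj i : EuclideanSpace ℝ (Fin N) →L[ℝ] ℝ) (v i) = 1 := by
        simp [hv, EuclideanSpace.single_apply]
      have h2 : (inner ℝ x (v i) : ℝ) = x i := by
        simp [hv, EuclideanSpace.inner_single_right]
      rw [h1, h2]
      ring
    have hnorm : ‖x‖ ^ (q - 2) * ((‖x‖ : ℝ) ^ (2:ℕ)) = ‖x‖ ^ q := by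
      rcases eq_or_ne x 0 with h | h
      · simp [h, Real.zero_rpow (show q ≠ 0 by linarith)]
      · rw [← Real.rpow_natCast ‖x‖ 2, ← Real.rpow_add (norm_pos_iff.2 h)]
        norm_num
    rw [← Finset.mul_sum]
    congr 1
    rw [Finset.sum_congr rfl fun i _ => hDg i]
    rw [Finset.sum_add_distrib, Finset.sum_const, ← Finset.mul_sum, sum_sq]
    simp only [Finset.card_univ, Fintype.card_fin, nsmul_eq_mul]
    linear_combination (α * q * (1 + ‖x‖ ^ q) ^ (α - 1)) * hnorm
  have PW2 : ∀ x : EuclideanSpace ℝ (Fin N), ∑ i : Fin N, fderiv ℝ u x (v i) * g i x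
      = fderiv ℝ u x x * W x := by
    intro x
    have h : ∀ i : Fin N, fderiv ℝ u x (v i) * g i x
        = fderiv ℝ u x ((x i) • v i) * W x := by
      intro i
      simp only [_root_.map_smul, smul_eq_mul, hg]
      ring
    rw [Finset.sum_congr rfl fun i _ => h i, ← Finset.sum_mul, ← map_sum, sum_single]
  calc ∫ x, u x * ((N : ℝ) * W x + α * q * ‖x‖ ^ q * (1 + ‖x‖ ^ q) ^ (α - 1))
      = ∫ x, ∑ i : Fin N, u x * fderiv ℝ (g i) x (v i) := by
        simp only [PW1]
    _ = - ∫ x, ∑ i : Fin N, fderiv ℝ u x (v i) * g i x := hsum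
    _ = - ∫ x, fderiv ℝ u x x * W x := by simp only [PW2]

/-- Hardy–Poincaré inequality on ℝ^N with weights
ω₁ = (1+|x|^{p/(p-1)})^{(p-1)(γ-1)}, ω₂ = (1+|x|^{p/(p-1)})^{(p-1)γ}
and constant K = N (p(γ-1)/(p-1))^{p-1}. -/
theorem hardy_poincare_power (N : ℕ) (hN : 1 ≤ N) (p γ : ℝ) (hp : 1 < p) (hγ : 1 < γ)
    (ξ : EuclideanSpace ℝ (Fin N) → ℝ)
    (hsmooth : ContDiff ℝ (⊤ : ℕ∞) ξ) (hcs : HasCompactSupport ξ) :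
    (N : ℝ) * (p * (γ - 1) / (p - 1)) ^ (p - 1) *
        ∫ x, |ξ x| ^ p * (1 + ‖x‖ ^ (p / (p - 1))) ^ ((p - 1) * (γ - 1))
      ≤ ∫ x, ‖fderiv ℝ ξ x‖ ^ p * (1 + ‖x‖ ^ (p / (p - 1))) ^ ((p - 1) * γ) := by
  have hp1 : 0 < p - 1 := by linarith
  have hγ1 : 0 < γ - 1 := by linarith
  have hp0 : (0:ℝ) < p := by linarith
  set q : ℝ := p / (p - 1) with hqdef
  have hq : 1 < q := by rw [hqdef, lt_div_iff₀ hp1]; linarith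
  have hq0 : (0:ℝ) < q := by linarith
  set α : ℝ := (p - 1) * (γ - 1) with hαdef
  have hα : 0 < α := mul_pos hp1 hγ1
  set c₀ : ℝ := p * (γ - 1) / (p - 1) with hc₀def
  have hc₀ : 0 < c₀ := by rw [hc₀def]; positivity
  set u : EuclideanSpace ℝ (Fin N) → ℝ := fun y => |ξ y| ^ p with hu
  set W : EuclideanSpace ℝ (Fin N) → ℝ := fun x => (1 + ‖x‖ ^ q) ^ α with hW
  have hux : ∀ x : EuclideanSpace ℝ (Fin N), |ξ x| ^ p = u x := fun _ => rfl
  have hWx : ∀ x : EuclideanSpace ℝ (Fin N), (1 + ‖x‖ ^ q) ^ α = W x := fun _ => rfl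
  have hBpos : ∀ x : EuclideanSpace ℝ (Fin N), (0:ℝ) < 1 + ‖x‖ ^ q := fun x => by positivity
  have hξ1 : ContDiff ℝ 1 ξ := hsmooth.of_le (by simp)
  have hu1 : ContDiff ℝ 1 u := by
    have h : u = fun y => ‖ξ y‖ ^ p := by ext y; rw [Real.norm_eq_abs]
    rw [h]; exact hξ1.norm_rpow hp
  have huc : HasCompactSupport u :=
    hcs.comp_left (g := fun t : ℝ => |t| ^ p)
      (by simp [Real.zero_rpow (show p ≠ 0 by linarith)])
  have hud : ∀ x, HasFDerivAt u ((p * |ξ x| ^ (p - 2) * ξ x) • fderiv ℝ ξ x) x := by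
    intro x
    exact (hasDerivAt_abs_rpow (ξ x) hp).comp_hasFDerivAt x
      ((hξ1.differentiable one_ne_zero) x).hasFDerivAt
  -- continuity facts
  have hnqc : Continuous (fun x : EuclideanSpace ℝ (Fin N) => ‖x‖ ^ q) :=
    continuous_norm.rpow_const (fun x => Or.inr hq0.le)
  have hBc : Continuous (fun x : EuclideanSpace ℝ (Fin N) => 1 + ‖x‖ ^ q) :=
    continuous_const.add hnqc
  have hWc : Continuous W := hBc.rpow_const (fun x => Or.inl (hBpos x).ne')
  have hBc1 : Continuous (fun x : EuclideanSpace ℝ (Fin N) => (1 + ‖x‖ ^ q) ^ (α - 1)) :=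
    hBc.rpow_const (fun x => Or.inl (hBpos x).ne')
  have hBc2 : Continuous (fun x : EuclideanSpace ℝ (Fin N) => (1 + ‖x‖ ^ q) ^ ((p - 1) * γ)) :=
    hBc.rpow_const (fun x => Or.inl (hBpos x).ne')
  -- integrability facts
  have I1 : Integrable (fun x => u x * W x) := by
    apply Continuous.integrable_of_hasCompactSupport (hu1.continuous.mul hWc)
    exact huc.mul_right
  have I2 : Integrable (fun x => u x * (α * q * ‖x‖ ^ q * (1 + ‖x‖ ^ q) ^ (α - 1))) := by
    apply Continuous.integrable_of_hasCompactSupport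
      (hu1.continuous.mul ((continuous_const.mul hnqc).mul hBc1))
    exact huc.mul_right
  have I3 : Integrable (fun x => fderiv ℝ u x x * W x) := by
    apply Continuous.integrable_of_hasCompactSupport
      (((hu1.continuous_fderiv one_ne_zero).clm_apply continuous_id).mul hWc)
    apply HasCompactSupport.mul_right
    exact HasCompactSupport.intro (huc.fderiv (𝕜 := ℝ)).isCompact
      (fun x hx => by rw [image_eq_zero_of_notMem_tsupport hx]; rfl)
  have I4 : Integrable (fun x => ‖fderiv ℝ ξ x‖ ^ p * (1 + ‖x‖ ^ q) ^ ((p - 1) * γ)) := by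
    apply Continuous.integrable_of_hasCompactSupport
      (((hsmooth.continuous_fderiv (by simp)).norm.rpow_const
        (fun x => Or.inr hp0.le)).mul hBc2)
    apply HasCompactSupport.mul_right
    exact (hcs.fderiv (𝕜 := ℝ)).comp_left (g := fun L : _ →L[ℝ] ℝ => ‖L‖ ^ p)
      (by simp [Real.zero_rpow (show p ≠ 0 by linarith)])
  -- divergence identity
  have E0 := div_identity hp hq hα ξ hsmooth hcs
  simp only [hux, hWx] at E0
  have E1 : ∫ x, u x * ((N : ℝ) * W x + α * q * ‖x‖ ^ q * (1 + ‖x‖ ^ q) ^ (α - 1))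
      = - ∫ x, fderiv ℝ u x x * W x := E0
  -- E1 : ∫ x, u x * (N * W x + α*q*‖x‖^q * B^(α-1)) = - ∫ x, fderiv ℝ u x x * W x
  have split : ∫ x, u x * ((N : ℝ) * W x + α * q * ‖x‖ ^ q * (1 + ‖x‖ ^ q) ^ (α - 1))
      = (N : ℝ) * (∫ x, u x * W x)
        + ∫ x, u x * (α * q * ‖x‖ ^ q * (1 + ‖x‖ ^ q) ^ (α - 1)) := by
    have hfe : (fun x : EuclideanSpace ℝ (Fin N) =>
          u x * ((N : ℝ) * W x + α * q * ‖x‖ ^ q * (1 + ‖x‖ ^ q) ^ (α - 1)))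
        = fun x => (N : ℝ) * (u x * W x)
            + u x * (α * q * ‖x‖ ^ q * (1 + ‖x‖ ^ q) ^ (α - 1)) :=
      funext fun x => by ring
    rw [hfe, integral_add (I1.const_mul _) I2, integral_const_mul]
  have hsub : ∫ x, (-(fderiv ℝ u x x * W x)
        - u x * (α * q * ‖x‖ ^ q * (1 + ‖x‖ ^ q) ^ (α - 1)))
      = - (∫ x, fderiv ℝ u x x * W x)
        - ∫ x, u x * (α * q * ‖x‖ ^ q * (1 + ‖x‖ ^ q) ^ (α - 1)) := by
    have I3n : Integrable (fun x => -(fderiv ℝ u x x * W x)) := I3.neg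
    rw [integral_sub I3n I2, integral_neg]
  have hαq : α * q = p * (γ - 1) := by rw [hαdef, hqdef]; field_simp
  have hmono : ∫ x, (-(fderiv ℝ u x x * W x)
        - u x * (α * q * ‖x‖ ^ q * (1 + ‖x‖ ^ q) ^ (α - 1)))
      ≤ ∫ x, c₀ ^ (1 - p) * (‖fderiv ℝ ξ x‖ ^ p * (1 + ‖x‖ ^ q) ^ ((p - 1) * γ)) := by
    have I3n : Integrable (fun x => -(fderiv ℝ u x x * W x)) := I3.neg
    have IL : Integrable (fun x => -(fderiv ℝ u x x * W x)
        - u x * (α * q * ‖x‖ ^ q * (1 + ‖x‖ ^ q) ^ (α - 1))) := I3n.sub I2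
    have IR : Integrable (fun x =>
        c₀ ^ (1 - p) * (‖fderiv ℝ ξ x‖ ^ p * (1 + ‖x‖ ^ q) ^ ((p - 1) * γ))) := I4.const_mul _
    apply integral_mono IL IR
    intro x
    dsimp only
    have hkey := pointwise_key hp hγ (ξ x) ‖x‖ (fderiv ℝ ξ x x) ‖fderiv ℝ ξ x‖
      (norm_nonneg x) (norm_nonneg _)
      (by simpa [Real.norm_eq_abs] using (fderiv ℝ ξ x).le_opNorm x)
    rw [← hqdef, ← hαdef, ← hc₀def] at hkey
    have hfdx : fderiv ℝ u x x = p * |ξ x| ^ (p - 2) * ξ x * fderiv ℝ ξ x x := by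
      rw [(hud x).fderiv]; simp [smul_eq_mul]
    rw [hfdx, hαq]
    simp only [hu, hW]
    linarith [hkey]
  -- combine
  have E2 : (N : ℝ) * (∫ x, u x * W x)
      ≤ c₀ ^ (1 - p) * ∫ x, ‖fderiv ℝ ξ x‖ ^ p * (1 + ‖x‖ ^ q) ^ ((p - 1) * γ) := by
    calc (N : ℝ) * (∫ x, u x * W x)
        ≤ ∫ x, c₀ ^ (1 - p) * (‖fderiv ℝ ξ x‖ ^ p * (1 + ‖x‖ ^ q) ^ ((p - 1) * γ)) := by
          linarith [hmono, hsub, split, E1]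
      _ = c₀ ^ (1 - p) * ∫ x, ‖fderiv ℝ ξ x‖ ^ p * (1 + ‖x‖ ^ q) ^ ((p - 1) * γ) :=
          integral_const_mul _ _
  have hfold : (∫ x, |ξ x| ^ p * (1 + ‖x‖ ^ q) ^ α) = ∫ x, u x * W x := by
    simp only [hux, hWx]
  rw [hfold]
  have hpow : c₀ ^ (p - 1) * c₀ ^ (1 - p) = 1 := by
    rw [← Real.rpow_add hc₀]; norm_num
  calc (N : ℝ) * c₀ ^ (p - 1) * ∫ x, u x * W x
      = c₀ ^ (p - 1) * ((N : ℝ) * (∫ x, u x * W x)) := by ring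
    _ ≤ c₀ ^ (p - 1) * (c₀ ^ (1 - p)
          * ∫ x, ‖fderiv ℝ ξ x‖ ^ p * (1 + ‖x‖ ^ q) ^ ((p - 1) * γ)) := by
        apply mul_le_mul_of_nonneg_left E2 (Real.rpow_nonneg hc₀.le _)
    _ = ∫ x, ‖fderiv ℝ ξ x‖ ^ p * (1 + ‖x‖ ^ q) ^ ((p - 1) * γ) := by
        rw [← mul_assoc, hpow, one_mul]
end

section
/- Let Ω ⊆ ℝ^N be open, let u ∈ C²(Ω) be superharmonic (Δu ≤ 0) with u > 0 and ∇u ≠ 0 a.e. on Ω, and let β > 3. Define ω₁(x) = u(x)^{−β−1}|∇u(x)|² and ω₂(x) = u(x)^{−β+1}. Then for every Lipschitz function ξ with compact support in Ω, 3(β−3) ∫_Ω |ξ|² ω₁ dx ≤ ∫_Ω |∇ξ|² ω₂ dx. -/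
/-
For the field T = u^{-β} ∇u one has −div T = β u^{-β-1}|∇u|² − u^{-β} Δu ≥ β ω₁ (as Δu ≤ 0) and
|T|² = ω₁ ω₂. Integrating ξ² (−div T) by parts, which is legitimate because ξ² is Lipschitz and
hence differentiable almost everywhere (Rademacher), and bounding 2ξ ∇ξ·T by Young's inequality
with weight β/2 gives β ∫ ξ² ω₁ ≤ (β/2) ∫ ξ² ω₁ + (2/β) ∫ |∇ξ|² ω₂, i.e.
(β²/4) ∫ ξ² ω₁ ≤ ∫ |∇ξ|² ω₂; finally β²/4 − 3(β − 3) = (β − 6)²/4 ≥ 0.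
Since T is C¹ only on Ω, it is first replaced by a compactly supported C¹ field that agrees with
it near the support of ξ.
-/

open MeasureTheory Real

/-- Divergence of a vector field on Euclidean space. -/
noncomputable def vecDiv {N : ℕ}
    (F : EuclideanSpace ℝ (Fin N) → EuclideanSpace ℝ (Fin N))
    (x : EuclideanSpace ℝ (Fin N)) : ℝ :=
  ∑ i, fderiv ℝ F x (EuclideanSpace.single i 1) i

/-- The Laplacian Δu = div(∇u). -/
noncomputable def laplacian {N : ℕ}
    (u : EuclideanSpace ℝ (Fin N) → ℝ) (x : EuclideanSpace ℝ (Fin N)) : ℝ :=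
  vecDiv (gradient u) x

open Topology
open scoped NNReal Manifold

/-- Young's inequality `2ab ≤ εa² + ε⁻¹b²` for `a = |s|√w₁`, `b = d√w₂`, stated without square
roots. -/
theorem two_mul_mul_le_of_sq_le_mul {s p d g w₁ w₂ ε : ℝ} (hε : 0 < ε) (hw₁ : 0 ≤ w₁)
    (hw₂ : 0 ≤ w₂) (hd : 0 ≤ d) (hg : g ^ 2 ≤ w₁ * w₂) (hp : |p| ≤ d * g) :
    2 * s * p ≤ ε * s ^ 2 * w₁ + ε⁻¹ * d ^ 2 * w₂ := by
  have hR : 0 ≤ ε * s ^ 2 * w₁ + ε⁻¹ * d ^ 2 * w₂ := by positivity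
  have hsq : (2 * |s| * (d * |g|)) ^ 2 ≤ (ε * s ^ 2 * w₁ + ε⁻¹ * d ^ 2 * w₂) ^ 2 := by
    have hsplit : (ε * s ^ 2 * w₁ + ε⁻¹ * d ^ 2 * w₂) ^ 2 =
        (ε * s ^ 2 * w₁ - ε⁻¹ * d ^ 2 * w₂) ^ 2 + 4 * s ^ 2 * d ^ 2 * (w₁ * w₂) := by
      field_simp; ring
    rw [hsplit, mul_pow, mul_pow, mul_pow, sq_abs, sq_abs]
    nlinarith [sq_nonneg (ε * s ^ 2 * w₁ - ε⁻¹ * d ^ 2 * w₂), sq_nonneg (s * d)]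
  calc 2 * s * p ≤ 2 * |s| * (d * |g|) := by
        have := abs_mul s p ▸ le_abs_self (s * p)
        nlinarith [abs_nonneg s, hp.trans (mul_le_mul_of_nonneg_left (le_abs_self g) hd)]
    _ ≤ _ := (pow_le_pow_iff_left₀ (by positivity) hR two_ne_zero).1 hsq

theorem norm_rpow_smul_sq {E : Type*} [NormedAddCommGroup E] [NormedSpace ℝ E] {t : ℝ}
    (ht : 0 < t) (p : ℝ) (v : E) : ‖t ^ p • v‖ ^ 2 = t ^ (p - 1) * ‖v‖ ^ 2 * t ^ (p + 1) := by
  rw [norm_smul, mul_pow, norm_eq_abs, sq_abs, ← rpow_natCast, ← rpow_mul ht.le, mul_right_comm,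
    ← rpow_add ht]
  ring_nf

theorem LipschitzWith.sq_of_norm_le {X : Type*} [PseudoMetricSpace X] {ξ : X → ℝ} {K M : ℝ≥0}
    (hξ : LipschitzWith K ξ) (hM : ∀ x, ‖ξ x‖ ≤ M) :
    LipschitzWith (2 * M * K) fun x ↦ ξ x ^ 2 := by
  refine LipschitzWith.of_dist_le_mul fun x y ↦ ?_
  have hsum : |ξ x + ξ y| ≤ 2 * M := by
    linarith [abs_add_le (ξ x) (ξ y), hM x, hM y, Real.norm_eq_abs (ξ x), Real.norm_eq_abs (ξ y)]
  calc dist (ξ x ^ 2) (ξ y ^ 2) = |ξ x + ξ y| * dist (ξ x) (ξ y) := by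
        rw [Real.dist_eq, Real.dist_eq, ← abs_mul]; ring_nf
    _ ≤ 2 * M * (K * dist x y) :=
        mul_le_mul hsum (hξ.dist_le_mul x y) dist_nonneg (by positivity)
    _ = _ := by push_cast; ring

theorem integrable_mul_of_isCompact {X : Type*} [TopologicalSpace X] [T2Space X]
    [MeasurableSpace X] [OpensMeasurableSpace X] {μ : Measure X} [IsFiniteMeasureOnCompacts μ]
    {f g : X → ℝ} {K : Set X} {c : ℝ} (hK : IsCompact K) (hf : AEStronglyMeasurable f μ)
    (hfc : ∀ x, ‖f x‖ ≤ c) (hfK : ∀ x ∉ K, f x = 0) (hg : ContinuousOn g K) :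
    Integrable (fun x ↦ f x * g x) μ :=
  IntegrableOn.integrable_of_forall_notMem_eq_zero
    ((hg.integrableOn_compact hK).bdd_mul hf.restrict (ae_of_all _ hfc))
    fun x hx ↦ by simp [hfK x hx]

theorem ContDiffOn.gradient_of_isOpen {E : Type*} [NormedAddCommGroup E] [InnerProductSpace ℝ E]
    [CompleteSpace E] {u : E → ℝ} {s : Set E} {m n : WithTop ℕ∞} (hu : ContDiffOn ℝ n u s)
    (hs : IsOpen s) (hmn : m + 1 ≤ n) : ContDiffOn ℝ m (gradient u) s :=
  (InnerProductSpace.toDual ℝ E).symm.contDiff.comp_contDiffOn (hu.fderiv_of_isOpen hs hmn)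

theorem ContDiffOn.exists_contDiff_hasCompactSupport_eventuallyEq {E F : Type*}
    [NormedAddCommGroup E] [NormedSpace ℝ E] [FiniteDimensional ℝ E] [NormedAddCommGroup F]
    [NormedSpace ℝ F] {n : ℕ∞} {f : E → F} {U K : Set E} (hf : ContDiffOn ℝ n f U)
    (hU : IsOpen U) (hK : IsCompact K) (hKU : K ⊆ U) :
    ∃ g : E → F, ContDiff ℝ n g ∧ HasCompactSupport g ∧ g =ᶠ[𝓝ˢ K] f := by
  obtain ⟨L, hL, hKL, hLU⟩ := exists_compact_between hK hU hKU
  obtain ⟨χ, hχ_one, hχ_zero, -⟩ :=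
    exists_contMDiffMap_one_nhds_of_subset_interior 𝓘(ℝ, E) hK.isClosed hKL (n := n)
  have hχ : ContDiff ℝ n χ := contMDiff_iff_contDiff.1 χ.contMDiff
  refine ⟨fun x ↦ χ x • f x, contDiff_iff_contDiffAt.2 fun x ↦ ?_,
    HasCompactSupport.intro hL fun x hx ↦ by simp [hχ_zero x hx], ?_⟩
  · by_cases hx : x ∈ U
    · exact hχ.contDiffAt.smul (hf.contDiffAt (hU.mem_nhds hx))
    · refine (contDiffAt_const (c := (0 : F))).congr_of_eventuallyEq ?_
      filter_upwards [hL.isClosed.isOpen_compl.mem_nhds fun h ↦ hx (hLU h)] with y hy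
      simp [hχ_zero y hy]
  · filter_upwards [hχ_one] with x hx
    simp [hx]

section LipschitzFDeriv

variable {E : Type*} [NormedAddCommGroup E] [NormedSpace ℝ E]
  [MeasurableSpace E] [BorelSpace E] {μ : Measure E} {C : ℝ≥0} {φ g : E → ℝ}

theorem LipschitzWith.integrable_fderiv_apply_mul [IsFiniteMeasureOnCompacts μ]
    (hφ : LipschitzWith C φ) (hg : Continuous g) (hgc : HasCompactSupport g) (v : E) :
    Integrable (fun x ↦ fderiv ℝ φ x v * g x) μ :=
  (hg.integrable_of_hasCompactSupport hgc).bdd_mul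
    (measurable_fderiv_apply_const ℝ φ v).aestronglyMeasurable
    (ae_of_all _ fun x ↦ ((fderiv ℝ φ x).le_opNorm v).trans <|
      mul_le_mul_of_nonneg_right (norm_fderiv_le_of_lipschitz ℝ hφ) (norm_nonneg v))

theorem LipschitzWith.integral_fderiv_apply_mul_eq_neg [FiniteDimensional ℝ E]
    [μ.IsAddHaarMeasure] (hφ : LipschitzWith C φ) (hg : ContDiff ℝ 1 g)
    (hgc : HasCompactSupport g) (v : E) :
    ∫ x, fderiv ℝ φ x v * g x ∂μ = -∫ x, φ x * fderiv ℝ g x v ∂μ := by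
  obtain ⟨D, hgL⟩ := hg.lipschitzWith_of_hasCompactSupport hgc one_ne_zero
  have hφ_ae : ∀ᵐ x ∂μ, lineDeriv ℝ φ x v = fderiv ℝ φ x v := by
    filter_upwards [hφ.ae_differentiableAt] with x hx using hx.lineDeriv_eq_fderiv
  have hg_line : ∀ x, lineDeriv ℝ g x (-v) = -fderiv ℝ g x v := fun x ↦ by
    rw [(hg.differentiable one_ne_zero x).lineDeriv_eq_fderiv, map_neg]
  calc ∫ x, fderiv ℝ φ x v * g x ∂μ = ∫ x, lineDeriv ℝ φ x v * g x ∂μ :=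
        integral_congr_ae <| by filter_upwards [hφ_ae] with x hx; rw [hx]
    _ = ∫ x, lineDeriv ℝ g x (-v) * φ x ∂μ := hφ.integral_lineDeriv_mul_eq hgL hgc v
    _ = -∫ x, φ x * fderiv ℝ g x v ∂μ := by
        simp only [hg_line, ← integral_neg, mul_neg, mul_comm]

theorem LipschitzWith.ae_fderiv_sq_apply_le [FiniteDimensional ℝ E] [μ.IsAddHaarMeasure]
    {ξ w₁ w₂ : E → ℝ} {T : E → E} {K : ℝ≥0} {ε : ℝ} (hξ : LipschitzWith K ξ) (hε : 0 < ε)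
    (hw₁ : ∀ x ∈ tsupport ξ, 0 ≤ w₁ x) (hw₂ : ∀ x ∈ tsupport ξ, 0 ≤ w₂ x)
    (hT_sq : ∀ x ∈ tsupport ξ, ‖T x‖ ^ 2 ≤ w₁ x * w₂ x) :
    ∀ᵐ x ∂μ, fderiv ℝ (fun y ↦ ξ y ^ 2) x (T x) ≤
      ε * (ξ x ^ 2 * w₁ x) + ε⁻¹ * (‖fderiv ℝ ξ x‖ ^ 2 * w₂ x) := by
  filter_upwards [hξ.ae_differentiableAt] with x hx
  have hderiv : fderiv ℝ (fun y ↦ ξ y ^ 2) x (T x) = 2 * ξ x * fderiv ℝ ξ x (T x) := by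
    simp [(hx.hasFDerivAt.pow 2).fderiv, mul_assoc]
  by_cases hxξ : x ∈ tsupport ξ
  · have := two_mul_mul_le_of_sq_le_mul (s := ξ x) hε (hw₁ x hxξ) (hw₂ x hxξ) (norm_nonneg _)
      (hT_sq x hxξ) (by simpa using (fderiv ℝ ξ x).le_opNorm (T x))
    linarith
  · simp [hderiv, image_eq_zero_of_notMem_tsupport hxξ, fderiv_of_notMem_tsupport ℝ hxξ]

end LipschitzFDeriv

section Divergence

variable {N : ℕ} {μ : Measure (EuclideanSpace ℝ (Fin N))} {C : ℝ≥0}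
  {φ : EuclideanSpace ℝ (Fin N) → ℝ} {T : EuclideanSpace ℝ (Fin N) → EuclideanSpace ℝ (Fin N)}
  {x : EuclideanSpace ℝ (Fin N)}

theorem ContinuousLinearMap.apply_eq_sum_apply_single_mul
    (L : EuclideanSpace ℝ (Fin N) →L[ℝ] ℝ) (w : EuclideanSpace ℝ (Fin N)) :
    L w = ∑ i, L (EuclideanSpace.single i 1) * w i := by
  conv_lhs => rw [← (EuclideanSpace.basisFun (Fin N) ℝ).sum_repr w]
  simp [mul_comm]

theorem fderiv_euclideanSpace_apply {v : EuclideanSpace ℝ (Fin N)} (hT : DifferentiableAt ℝ T x)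
    (i : Fin N) : fderiv ℝ (fun y ↦ T y i) x v = fderiv ℝ T x v i :=
  congrArg (· v) ((EuclideanSpace.proj i).hasFDerivAt.comp x hT.hasFDerivAt).fderiv

theorem ContDiff.continuous_vecDiv (hT : ContDiff ℝ 1 T) : Continuous (vecDiv T) := by
  have := hT.continuous_fderiv one_ne_zero
  unfold vecDiv
  fun_prop

theorem Filter.EventuallyEq.vecDiv_eq {T' : EuclideanSpace ℝ (Fin N) → EuclideanSpace ℝ (Fin N)}
    (h : T' =ᶠ[𝓝 x] T) : vecDiv T' x = vecDiv T x := by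
  simp only [vecDiv, h.fderiv_eq]

theorem vecDiv_smul {f : EuclideanSpace ℝ (Fin N) → ℝ} (hf : DifferentiableAt ℝ f x)
    (hT : DifferentiableAt ℝ T x) :
    vecDiv (fun y ↦ f y • T y) x = f x * vecDiv T x + fderiv ℝ f x (T x) := by
  rw [vecDiv, vecDiv, fderiv_fun_smul hf hT, (fderiv ℝ f x).apply_eq_sum_apply_single_mul,
    Finset.mul_sum, ← Finset.sum_add_distrib]
  simp

theorem vecDiv_rpow_smul_gradient {u : EuclideanSpace ℝ (Fin N) → ℝ}
    (hu : DifferentiableAt ℝ u x) (hgrad : DifferentiableAt ℝ (gradient u) x) (hx : u x ≠ 0)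
    (p : ℝ) :
    vecDiv (fun y ↦ u y ^ p • gradient u y) x =
      u x ^ p * laplacian u x + p * u x ^ (p - 1) * ‖gradient u x‖ ^ 2 := by
  rw [vecDiv_smul (hu.rpow_const (Or.inl hx)) hgrad,
    (hu.hasFDerivAt.rpow_const (Or.inl hx)).fderiv, laplacian]
  simp [← inner_gradient_left, mul_assoc]

theorem le_neg_vecDiv_rpow_smul_gradient {u : EuclideanSpace ℝ (Fin N) → ℝ}
    (hu : DifferentiableAt ℝ u x) (hgrad : DifferentiableAt ℝ (gradient u) x) (hx : 0 < u x)
    (hΔ : laplacian u x ≤ 0) (β : ℝ) :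
    β * (u x ^ (-β - 1) * ‖gradient u x‖ ^ 2) ≤
      -vecDiv (fun y ↦ u y ^ (-β) • gradient u y) x := by
  rw [vecDiv_rpow_smul_gradient hu hgrad hx.ne']
  nlinarith [mul_nonpos_of_nonneg_of_nonpos (rpow_nonneg hx.le (-β)) hΔ]

theorem LipschitzWith.integrable_fderiv_apply [IsFiniteMeasureOnCompacts μ]
    (hφ : LipschitzWith C φ) (hT : Continuous T) (hTc : HasCompactSupport T) :
    Integrable (fun x ↦ fderiv ℝ φ x (T x)) μ := by
  rw [funext fun x ↦ (fderiv ℝ φ x).apply_eq_sum_apply_single_mul (T x)]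
  exact integrable_finsetSum _ fun i _ ↦ hφ.integrable_fderiv_apply_mul (by fun_prop)
    (hTc.comp_left (g := fun w : EuclideanSpace ℝ (Fin N) ↦ w i) rfl) _

theorem LipschitzWith.integral_fderiv_apply_eq_neg_integral_mul_vecDiv [μ.IsAddHaarMeasure]
    (hφ : LipschitzWith C φ) (hT : ContDiff ℝ 1 T) (hTc : HasCompactSupport T) :
    ∫ x, fderiv ℝ φ x (T x) ∂μ = -∫ x, φ x * vecDiv T x ∂μ := by
  have hTi : ∀ i, ContDiff ℝ 1 (fun x ↦ T x i) := fun i ↦ by fun_prop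
  have hTic : ∀ i, HasCompactSupport (fun x ↦ T x i) := fun i ↦
    hTc.comp_left (g := fun w : EuclideanSpace ℝ (Fin N) ↦ w i) rfl
  have hdiv : ∀ x, φ x * vecDiv T x =
      ∑ i, φ x * fderiv ℝ (fun y ↦ T y i) x (EuclideanSpace.single i 1) := fun x ↦ by
    simp only [vecDiv, Finset.mul_sum,
      fderiv_euclideanSpace_apply (hT.differentiable one_ne_zero x)]
  rw [funext fun x ↦ (fderiv ℝ φ x).apply_eq_sum_apply_single_mul (T x), funext hdiv,
    integral_finsetSum _ fun i _ ↦ hφ.integrable_fderiv_apply_mul (hTi i).continuous (hTic i) _,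
    integral_finsetSum _ fun i _ ↦ ?_, ← Finset.sum_neg_distrib]
  · exact Finset.sum_congr rfl fun i _ ↦ hφ.integral_fderiv_apply_mul_eq_neg (hTi i) (hTic i) _
  · exact (hφ.continuous.mul (((hTi i).continuous_fderiv one_ne_zero).clm_apply
      continuous_const)).integrable_of_hasCompactSupport ((hTic i).fderiv_apply (𝕜 := ℝ) _).mul_left

end Divergence

section Hardy

variable {N : ℕ} {μ : Measure (EuclideanSpace ℝ (Fin N))} [μ.IsAddHaarMeasure]
  {ξ : EuclideanSpace ℝ (Fin N) → ℝ} {T : EuclideanSpace ℝ (Fin N) → EuclideanSpace ℝ (Fin N)}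
  {K : ℝ≥0} {w₁ w₂ : EuclideanSpace ℝ (Fin N) → ℝ} {c : ℝ}

theorem hardy_of_le_neg_vecDiv_of_contDiff (hξ : LipschitzWith K ξ) (hξc : HasCompactSupport ξ)
    (hT : ContDiff ℝ 1 T) (hTc : HasCompactSupport T) (hc : 0 < c)
    (hw₁ : ContinuousOn w₁ (tsupport ξ)) (hw₂ : ContinuousOn w₂ (tsupport ξ))
    (hw₁_nonneg : ∀ x ∈ tsupport ξ, 0 ≤ w₁ x) (hw₂_nonneg : ∀ x ∈ tsupport ξ, 0 ≤ w₂ x)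
    (hdiv : ∀ x ∈ tsupport ξ, c * w₁ x ≤ -vecDiv T x)
    (hT_sq : ∀ x ∈ tsupport ξ, ‖T x‖ ^ 2 ≤ w₁ x * w₂ x) :
    c ^ 2 / 4 * ∫ x, ξ x ^ 2 * w₁ x ∂μ ≤ ∫ x, ‖fderiv ℝ ξ x‖ ^ 2 * w₂ x ∂μ := by
  obtain ⟨M, hM⟩ := hξc.exists_bound_of_continuous hξ.continuous
  have hφ : LipschitzWith _ fun x ↦ ξ x ^ 2 :=
    hξ.sq_of_norm_le (M := M.toNNReal) fun x ↦ (hM x).trans (Real.le_coe_toNNReal M)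
  have hξ0 : ∀ x ∉ tsupport ξ, ξ x = 0 := fun x hx ↦ image_eq_zero_of_notMem_tsupport hx
  have hA : Integrable (fun x ↦ ξ x ^ 2 * w₁ x) μ :=
    integrable_mul_of_isCompact hξc hφ.continuous.aestronglyMeasurable (c := M ^ 2)
      (fun x ↦ by simpa using pow_le_pow_left₀ (norm_nonneg _) (hM x) 2)
      (fun x hx ↦ by simp [hξ0 x hx]) hw₁
  have hB : Integrable (fun x ↦ ‖fderiv ℝ ξ x‖ ^ 2 * w₂ x) μ :=
    integrable_mul_of_isCompact hξc
      ((measurable_fderiv ℝ ξ).norm.pow_const 2).aestronglyMeasurable (c := K ^ 2)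
      (fun x ↦ by simpa using pow_le_pow_left₀ (norm_nonneg _) (norm_fderiv_le_of_lipschitz ℝ hξ) 2)
      (fun x hx ↦ by simp [fderiv_of_notMem_tsupport ℝ hx]) hw₂
  have hdivφ : Integrable (fun x ↦ ξ x ^ 2 * vecDiv T x) μ :=
    (hφ.continuous.mul hT.continuous_vecDiv).integrable_of_hasCompactSupport
      (hξc.comp_left (g := fun t : ℝ ↦ t ^ 2) (by norm_num)).mul_right
  have hchain : c * ∫ x, ξ x ^ 2 * w₁ x ∂μ ≤
      c / 2 * ∫ x, ξ x ^ 2 * w₁ x ∂μ + (c / 2)⁻¹ * ∫ x, ‖fderiv ℝ ξ x‖ ^ 2 * w₂ x ∂μ :=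
    calc c * ∫ x, ξ x ^ 2 * w₁ x ∂μ = ∫ x, c * (ξ x ^ 2 * w₁ x) ∂μ := (integral_const_mul _ _).symm
      _ ≤ ∫ x, -(ξ x ^ 2 * vecDiv T x) ∂μ := integral_mono (hA.const_mul c) hdivφ.neg fun x ↦ by
          by_cases hxξ : x ∈ tsupport ξ
          · nlinarith [mul_le_mul_of_nonneg_left (hdiv x hxξ) (sq_nonneg (ξ x))]
          · simp [hξ0 x hxξ]
      _ = ∫ x, fderiv ℝ (fun y ↦ ξ y ^ 2) x (T x) ∂μ := by
          rw [integral_neg, hφ.integral_fderiv_apply_eq_neg_integral_mul_vecDiv hT hTc]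
      _ ≤ ∫ x, c / 2 * (ξ x ^ 2 * w₁ x) + (c / 2)⁻¹ * (‖fderiv ℝ ξ x‖ ^ 2 * w₂ x) ∂μ :=
          integral_mono_ae (hφ.integrable_fderiv_apply hT.continuous hTc)
            ((hA.const_mul _).add (hB.const_mul _))
            (hξ.ae_fderiv_sq_apply_le (half_pos hc) hw₁_nonneg hw₂_nonneg hT_sq)
      _ = _ := by
          rw [integral_add (hA.const_mul _) (hB.const_mul _), integral_const_mul,
            integral_const_mul]
  field_simp at hchain
  nlinarith

theorem hardy_of_le_neg_vecDiv (hξ : LipschitzWith K ξ) (hξc : HasCompactSupport ξ)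
    {U : Set (EuclideanSpace ℝ (Fin N))} (hU : IsOpen U) (hξU : tsupport ξ ⊆ U)
    (hT : ContDiffOn ℝ 1 T U) (hc : 0 < c)
    (hw₁ : ContinuousOn w₁ (tsupport ξ)) (hw₂ : ContinuousOn w₂ (tsupport ξ))
    (hw₁_nonneg : ∀ x ∈ tsupport ξ, 0 ≤ w₁ x) (hw₂_nonneg : ∀ x ∈ tsupport ξ, 0 ≤ w₂ x)
    (hdiv : ∀ x ∈ tsupport ξ, c * w₁ x ≤ -vecDiv T x)
    (hT_sq : ∀ x ∈ tsupport ξ, ‖T x‖ ^ 2 ≤ w₁ x * w₂ x) :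
    c ^ 2 / 4 * ∫ x, ξ x ^ 2 * w₁ x ∂μ ≤ ∫ x, ‖fderiv ℝ ξ x‖ ^ 2 * w₂ x ∂μ := by
  obtain ⟨G, hG, hGc, hGT⟩ := hT.exists_contDiff_hasCompactSupport_eventuallyEq hU hξc hξU
  have hGT_at : ∀ x ∈ tsupport ξ, G =ᶠ[𝓝 x] T := fun x hx ↦ hGT.filter_mono (nhds_le_nhdsSet hx)
  exact hardy_of_le_neg_vecDiv_of_contDiff hξ hξc hG hGc hc hw₁ hw₂ hw₁_nonneg hw₂_nonneg
    (fun x hx ↦ (hGT_at x hx).vecDiv_eq ▸ hdiv x hx)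
    (fun x hx ↦ (hGT_at x hx).eq_of_nhds ▸ hT_sq x hx)

end Hardy

theorem superharmonic_hardy_general (N : ℕ) (Ω : Set (EuclideanSpace ℝ (Fin N))) (hΩ : IsOpen Ω)
    (u : EuclideanSpace ℝ (Fin N) → ℝ) (hu : ContDiffOn ℝ 2 u Ω)
    (hsuper : ∀ x ∈ Ω, laplacian u x ≤ 0)
    (hupos : ∀ x ∈ Ω, 0 < u x)
    (β : ℝ) (hβ : 3 < β)
    (ξ : EuclideanSpace ℝ (Fin N) → ℝ)
    (hLip : ∃ K, LipschitzWith K ξ) (hcs : HasCompactSupport ξ)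
    (hsub : tsupport ξ ⊆ Ω) :
    3 * (β - 3) * ∫ x in Ω, |ξ x| ^ 2 * ((u x) ^ (-β - 1) * ‖gradient u x‖ ^ 2)
      ≤ ∫ x in Ω, ‖fderiv ℝ ξ x‖ ^ 2 * (u x) ^ (-β + 1) := by
  obtain ⟨K, hξ⟩ := hLip
  have hgrad : ContDiffOn ℝ 1 (gradient u) Ω := hu.gradient_of_isOpen hΩ (by norm_num)
  have hrpow : ∀ p : ℝ, ContDiffOn ℝ 1 (fun x ↦ u x ^ p) Ω := fun p ↦
    (hu.of_le one_le_two).rpow_const_of_ne fun x hx ↦ (hupos x hx).ne'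
  have hhardy := hardy_of_le_neg_vecDiv (μ := volume) hξ hcs hΩ hsub
    ((hrpow (-β)).smul hgrad) (c := β) (by linarith)
    (w₁ := fun x ↦ u x ^ (-β - 1) * ‖gradient u x‖ ^ 2) (w₂ := fun x ↦ u x ^ (-β + 1))
    (((hrpow _).continuousOn.mul (hgrad.continuousOn.norm.pow 2)).mono hsub)
    ((hrpow _).continuousOn.mono hsub)
    (fun x hx ↦ by have := hupos x (hsub hx); positivity)
    (fun x hx ↦ by have := hupos x (hsub hx); positivity)
    (fun x hx ↦ have hxΩ := hΩ.mem_nhds (hsub hx)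
      le_neg_vecDiv_rpow_smul_gradient ((hu.differentiableOn two_ne_zero).differentiableAt hxΩ)
        ((hgrad.differentiableOn one_ne_zero).differentiableAt hxΩ) (hupos x (hsub hx))
        (hsuper x (hsub hx)) β)
    (fun x hx ↦ (norm_rpow_smul_sq (hupos x (hsub hx)) _ _).le)
  have hA : 0 ≤ ∫ x in Ω, |ξ x| ^ 2 * (u x ^ (-β - 1) * ‖gradient u x‖ ^ 2) :=
    setIntegral_nonneg hΩ.measurableSet fun x hx ↦ by have := hupos x hx; positivity
  rw [setIntegral_eq_integral_of_forall_compl_eq_zero fun x hx ↦ by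
      simp [image_eq_zero_of_notMem_tsupport fun h ↦ hx (hsub h)]] at hA ⊢
  rw [setIntegral_eq_integral_of_forall_compl_eq_zero fun x hx ↦ by
      simp [fderiv_of_notMem_tsupport ℝ fun h ↦ hx (hsub h)]]
  simp only [sq_abs] at hA ⊢
  nlinarith [mul_nonneg hA (sq_nonneg (β - 6))]

/-- Hardy inequality generated by a positive superharmonic function u:
with ω₁ = u^{-β-1}|∇u|², ω₂ = u^{-β+1} and β > 3, one has
3(β−3) ∫ |ξ|² ω₁ ≤ ∫ |∇ξ|² ω₂ for Lipschitz ξ compactly supported in Ω. -/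
theorem superharmonic_hardy (N : ℕ) (Ω : Set (EuclideanSpace ℝ (Fin N))) (hΩ : IsOpen Ω)
    (u : EuclideanSpace ℝ (Fin N) → ℝ) (hu : ContDiffOn ℝ 2 u Ω)
    (hsuper : ∀ x ∈ Ω, laplacian u x ≤ 0)
    (hupos : ∀ x ∈ Ω, 0 < u x)
    (hgrad : ∀ᵐ x ∂(volume.restrict Ω), gradient u x ≠ 0)
    (β : ℝ) (hβ : 3 < β)
    (ξ : EuclideanSpace ℝ (Fin N) → ℝ)
    (hLip : ∃ K, LipschitzWith K ξ) (hcs : HasCompactSupport ξ)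
    (hsub : tsupport ξ ⊆ Ω) :
    3 * (β - 3) * ∫ x in Ω, |ξ x| ^ 2 * ((u x) ^ (-β - 1) * ‖gradient u x‖ ^ 2)
      ≤ ∫ x in Ω, ‖fderiv ℝ ξ x‖ ^ 2 * (u x) ^ (-β + 1) :=
  superharmonic_hardy_general N Ω hΩ u hu hsuper hupos β hβ ξ hLip hcs hsub
end
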